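/- Let a, b, c be complex numbers, let α = (α_i)_{i≥0} and β = (β_j)_{j≥0} be the sequences with α_i = 2^{i-1}(i·a + 2c) and β_j = 2^{j-1}(j·b + 2c). Then for every integer n ≥ 2, det(P_{α,β}(n)) = (-1)^{n+1}·(a+b)^{n-2}·[c(a+b) + (n-1)ab]. -/

import Mathlib

open Matrix

/-- Entry `P_{i,j}` of the generalized Pascal triangle associated to sequences `α`, `β`:
`P_{i,0} = α i`, `P_{0,j} = β j`, and `P_{i,j} = P_{i-1,j} + P_{i,j-1}` for `i, j ≥ 1`. -/
def pascalEntry {R : Type*} [CommRing R] (α β : ℕ → R) : ℕ → ℕ → R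
  | i, 0 => α i
  | 0, j + 1 => β (j + 1)
  | i + 1, j + 1 => pascalEntry α β i (j + 1) + pascalEntry α β (i + 1) j

/-- The generalized Pascal triangle `P_{α,β}(n)`. -/
def genPascal {R : Type*} [CommRing R] (α β : ℕ → R) (n : ℕ) :
    Matrix (Fin n) (Fin n) R :=
  Matrix.of fun i j => pascalEntry α β (i : ℕ) (j : ℕ)

/-- The Töplitz matrix `T_{α,β}(n)`: `t_{i,j} = α_{i-j}` if `i ≥ j`, else `β_{j-i}`. -/
def toeplitz {R : Type*} [CommRing R] (α β : ℕ → R) (n : ℕ) :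
    Matrix (Fin n) (Fin n) R :=
  Matrix.of fun i j => if (j : ℕ) ≤ (i : ℕ) then α ((i : ℕ) - (j : ℕ)) else β ((j : ℕ) - (i : ℕ))

/-- The unipotent lower triangular matrix `L(n)` with `L_{i,j} = C(i,j)` for `i ≥ j`. -/
def lowerL (R : Type*) [CommRing R] (n : ℕ) : Matrix (Fin n) (Fin n) R :=
  Matrix.of fun i j => if (j : ℕ) ≤ (i : ℕ) then ((i : ℕ).choose (j : ℕ) : R) else 0

/-- The binomial inverse transform `α̂_i = ∑_{k=0}^{i} (-1)^{i+k} C(i,k) α_k`. -/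
def hatSeq {R : Type*} [CommRing R] (α : ℕ → R) (i : ℕ) : R :=
  ∑ k ∈ Finset.range (i + 1), (-1 : R) ^ (i + k) * (i.choose k : R) * α k

/-- The binomial transform `α̌_i = ∑_{k=0}^{i} C(i,k) α_k`. -/
def checkSeq {R : Type*} [CommRing R] (α : ℕ → R) (i : ℕ) : R :=
  ∑ k ∈ Finset.range (i + 1), (i.choose k : R) * α k

/-!
If `α̌, β̌` are the binomial transforms of `α, β` with `α 0 = β 0`, the Pascal recursion for
`P_{α̌,β̌}` becomes the shift invariance `t (k+1) (l+1) = t k l` of the Toeplitz kernel of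
`T_{α,β}`, and `P_{α̌,β̌}(n) = L T_{α,β}(n) Lᵀ` with `L` the unipotent Pascal matrix; hence
`det P_{α̌,β̌}(n) = det T_{α,β}(n)`. The sequences of the theorem are the binomial transforms of
the arithmetic progressions `k a + c` and `l b + c`. Writing `T = S E Sᵀ` with `S` the
lower triangular matrix of ones, `E` is the matrix of mixed second differences of the Toeplitz
kernel, which for arithmetic progressions is the arrowhead matrix with corner `c`, first column
`a`, first row `b` and diagonal `d = -(a + b)`. Expanding along the last row gives
`det E = d ^ (n - 2) * (c d - (n - 1) a b)`.
-/

open Finset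

variable {R : Type*}

def toeplitzEntry (α β : ℕ → R) (k l : ℕ) : R :=
  if l ≤ k then α (k - l) else β (l - k)

theorem toeplitzEntry_succ_succ (α β : ℕ → R) (k l : ℕ) :
    toeplitzEntry α β (k + 1) (l + 1) = toeplitzEntry α β k l := by
  simp [toeplitzEntry]

theorem toeplitzEntry_of_le {α β : ℕ → R} {k l : ℕ} (hlk : l ≤ k) :
    toeplitzEntry α β k l = α (k - l) :=
  if_pos hlk

theorem toeplitzEntry_of_ge {α β : ℕ → R} (h : α 0 = β 0) {k l : ℕ} (hkl : k ≤ l) :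
    toeplitzEntry α β k l = β (l - k) := by
  rcases hkl.eq_or_lt with rfl | hlt
  · simp [toeplitzEntry, h]
  · exact if_neg (not_le.mpr hlt)

theorem toeplitzEntry_zero_right (α β : ℕ → R) (k : ℕ) : toeplitzEntry α β k 0 = α k :=
  toeplitzEntry_of_le (Nat.zero_le k)

theorem toeplitzEntry_zero_left {α β : ℕ → R} (h : α 0 = β 0) : toeplitzEntry α β 0 = β :=
  funext fun l => toeplitzEntry_of_ge h (Nat.zero_le l)

variable [CommRing R]

theorem toeplitz_eq_of (α β : ℕ → R) (n : ℕ) :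
    toeplitz α β n = of fun i j : Fin n => toeplitzEntry α β i j :=
  rfl

theorem checkSeq_zero (α : ℕ → R) : checkSeq α 0 = α 0 := by
  simp [checkSeq]

theorem checkSeq_add (α β : ℕ → R) (i : ℕ) :
    checkSeq (fun k => α k + β k) i = checkSeq α i + checkSeq β i := by
  simp only [checkSeq, mul_add, sum_add_distrib]

theorem checkSeq_succ (α : ℕ → R) (i : ℕ) :
    checkSeq α (i + 1) = checkSeq α i + checkSeq (fun k => α (k + 1)) i := by
  simp only [checkSeq]
  rw [sum_range_succ' _ (i + 1), sum_range_succ' (fun k => (i.choose k : R) * α k)]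
  simp only [Nat.choose_succ_succ', Nat.cast_add, add_mul, sum_add_distrib,
    sum_range_succ (fun k => (i.choose (k + 1) : R) * α (k + 1)), Nat.choose_succ_self,
    Nat.choose_zero_right]
  push_cast
  ring

theorem two_mul_checkSeq_arith (x c : R) (i : ℕ) :
    2 * checkSeq (fun k => (k : R) * x + c) i = 2 ^ i * (i * x + 2 * c) := by
  induction i generalizing c with
  | zero => simp [checkSeq_zero]
  | succ i ih =>
    have hshift :
        (fun k : ℕ => ((k + 1 : ℕ) : R) * x + c) = fun k : ℕ => (k : R) * x + (c + x) := by
      funext k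
      push_cast
      ring
    rw [checkSeq_succ, hshift, mul_add, ih, ih]
    push_cast
    ring

theorem pascalEntry_eq_of_rec {α β : ℕ → R} {F : ℕ → ℕ → R} (hcol : ∀ i, F i 0 = α i)
    (hrow : ∀ j, F 0 (j + 1) = β (j + 1))
    (hrec : ∀ i j, F (i + 1) (j + 1) = F i (j + 1) + F (i + 1) j) (i j : ℕ) :
    pascalEntry α β i j = F i j := by
  fun_induction pascalEntry α β i j with
  | case1 i => exact (hcol i).symm
  | case2 j => exact (hrow j).symm
  | case3 i j ih₁ ih₂ => rw [hrec, ih₁, ih₂]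

theorem pascalEntry_checkSeq {α β : ℕ → R} (h : α 0 = β 0) (i j : ℕ) :
    pascalEntry (checkSeq α) (checkSeq β) i j =
      checkSeq (fun k => checkSeq (toeplitzEntry α β k) j) i := by
  refine pascalEntry_eq_of_rec
    (F := fun i j => checkSeq (fun k => checkSeq (toeplitzEntry α β k) j) i)
    (fun i => ?_) (fun j => ?_) (fun i j => ?_) i j
  · simp only [checkSeq_zero, toeplitzEntry_zero_right]
  · simp only [checkSeq_zero, toeplitzEntry_zero_left h]
  · have hshift : ∀ k, checkSeq (toeplitzEntry α β (k + 1)) (j + 1) =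
        checkSeq (toeplitzEntry α β (k + 1)) j + checkSeq (toeplitzEntry α β k) j := fun k => by
      simp only [checkSeq_succ, toeplitzEntry_succ_succ]
    simp only [checkSeq_succ (fun k => checkSeq (toeplitzEntry α β k) _) i, hshift]
    rw [checkSeq_add]
    ring

theorem sum_fin_ite_le {n : ℕ} (i : Fin n) (g : ℕ → R) :
    ∑ k : Fin n, (if (k : ℕ) ≤ i then g k else 0) = ∑ k ∈ range (i + 1), g k := by
  rw [Fin.sum_univ_eq_sum_range (fun k => if k ≤ (i : ℕ) then g k else 0), ← sum_filter]
  congr 1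
  ext k
  simp only [mem_filter, mem_range]
  omega

theorem lowerL_mul_apply {n : ℕ} (f : ℕ → ℕ → R) (i j : Fin n) :
    (lowerL R n * of fun k l : Fin n => f k l) i j = checkSeq (fun k => f k j) i := by
  simp only [mul_apply, lowerL, of_apply, ite_mul, zero_mul]
  exact sum_fin_ite_le i fun k => ((i : ℕ).choose k : R) * f k j

theorem mul_lowerL_transpose_apply {n : ℕ} (f : ℕ → ℕ → R) (i j : Fin n) :
    ((of fun k l : Fin n => f k l) * (lowerL R n)ᵀ) i j = checkSeq (f i) j := by
  simp only [mul_apply, transpose_apply, lowerL, of_apply, mul_ite, mul_zero]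
  exact (sum_fin_ite_le j fun l => f i l * ((j : ℕ).choose l : R)).trans
    (by simp only [checkSeq, mul_comm])

theorem det_lowerL (n : ℕ) : (lowerL R n).det = 1 := by
  have hlower : (lowerL R n).IsLowerTriangular := fun i j hij => if_neg (not_le.mpr hij)
  rw [det_of_isLowerTriangular _ hlower]
  simp [lowerL]

theorem genPascal_checkSeq {α β : ℕ → R} (h : α 0 = β 0) (n : ℕ) :
    genPascal (checkSeq α) (checkSeq β) n = lowerL R n * toeplitz α β n * (lowerL R n)ᵀ := by
  have hT : toeplitz α β n * (lowerL R n)ᵀ =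
      of fun k j : Fin n => checkSeq (toeplitzEntry α β k) j := by
    ext k j
    exact mul_lowerL_transpose_apply (toeplitzEntry α β) k j
  ext i j
  rw [Matrix.mul_assoc, hT]
  exact (pascalEntry_checkSeq h i j).trans (lowerL_mul_apply _ i j).symm

theorem det_genPascal_checkSeq {α β : ℕ → R} (h : α 0 = β 0) (n : ℕ) :
    (genPascal (checkSeq α) (checkSeq β) n).det = (toeplitz α β n).det := by
  rw [genPascal_checkSeq h, det_mul, det_mul, det_transpose, det_lowerL, one_mul, mul_one]

def backDiff (f : ℕ → R) : ℕ → R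
  | 0 => f 0
  | k + 1 => f (k + 1) - f k

def mixedDiff (t : ℕ → ℕ → R) (k l : ℕ) : R :=
  backDiff (fun k' => backDiff (t k') l) k

theorem sum_range_backDiff (f : ℕ → R) (i : ℕ) : ∑ k ∈ range (i + 1), backDiff f k = f i := by
  induction i with
  | zero => simp [backDiff]
  | succ i ih => rw [sum_range_succ, ih, backDiff, add_sub_cancel]

def lowerOnes (R : Type*) [CommRing R] (n : ℕ) : Matrix (Fin n) (Fin n) R :=
  of fun i j => if (j : ℕ) ≤ (i : ℕ) then 1 else 0

theorem lowerOnes_mul_apply {n : ℕ} (f : ℕ → ℕ → R) (i j : Fin n) :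
    (lowerOnes R n * of fun k l : Fin n => f k l) i j = ∑ k ∈ range (i + 1), f k j := by
  simp only [mul_apply, lowerOnes, of_apply, ite_mul, one_mul, zero_mul]
  exact sum_fin_ite_le i fun k => f k j

theorem mul_lowerOnes_transpose_apply {n : ℕ} (f : ℕ → ℕ → R) (i j : Fin n) :
    ((of fun k l : Fin n => f k l) * (lowerOnes R n)ᵀ) i j = ∑ l ∈ range (j + 1), f i l := by
  simp only [mul_apply, transpose_apply, lowerOnes, of_apply, mul_ite, mul_one, mul_zero]
  exact sum_fin_ite_le j (f i)

theorem det_lowerOnes (n : ℕ) : (lowerOnes R n).det = 1 := by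
  have hlower : (lowerOnes R n).IsLowerTriangular := fun i j hij => if_neg (not_le.mpr hij)
  rw [det_of_isLowerTriangular _ hlower]
  simp [lowerOnes]

theorem lowerOnes_mul_mixedDiff_mul_transpose (t : ℕ → ℕ → R) (n : ℕ) :
    lowerOnes R n * (of fun i j : Fin n => mixedDiff t i j) * (lowerOnes R n)ᵀ =
      of fun i j : Fin n => t i j := by
  have hrows : lowerOnes R n * (of fun i j : Fin n => mixedDiff t i j) =
      of fun i j : Fin n => backDiff (t i) j := by
    ext i j
    exact (lowerOnes_mul_apply (mixedDiff t) i j).trans (sum_range_backDiff _ i)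
  ext i j
  rw [hrows]
  exact (mul_lowerOnes_transpose_apply (fun k => backDiff (t k)) i j).trans
    (sum_range_backDiff _ j)

theorem det_eq_det_mixedDiff (t : ℕ → ℕ → R) (n : ℕ) :
    (of fun i j : Fin n => t i j).det = (of fun i j : Fin n => mixedDiff t i j).det := by
  rw [← lowerOnes_mul_mixedDiff_mul_transpose t, det_mul, det_mul, det_transpose, det_lowerOnes,
    one_mul, mul_one]

theorem mixedDiff_toeplitzEntry_arith (a b c : R) (k l : ℕ) :
    mixedDiff (toeplitzEntry (fun k => (k : R) * a + c) (fun l => (l : R) * b + c)) k l =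
      if k = 0 then (if l = 0 then c else b) else if l = 0 then a else if k = l then -(a + b)
      else 0 := by
  set α : ℕ → R := fun k => k * a + c
  set β : ℕ → R := fun l => l * b + c
  have h₀ : α 0 = β 0 := by simp [α, β]
  rcases k with _ | k <;> rcases l with _ | l
  · simp [mixedDiff, backDiff, toeplitzEntry_zero_right, α]
  · rw [if_pos rfl, if_neg l.succ_ne_zero]
    simp only [mixedDiff, backDiff, toeplitzEntry_zero_left h₀, β]
    push_cast
    ring
  · rw [if_neg k.succ_ne_zero, if_pos rfl]
    simp only [mixedDiff, backDiff, toeplitzEntry_zero_right, α]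
    push_cast
    ring
  · simp only [mixedDiff, backDiff, toeplitzEntry_succ_succ, if_neg k.succ_ne_zero,
      if_neg l.succ_ne_zero, Nat.add_right_cancel_iff]
    rcases lt_trichotomy k l with h | rfl | h
    · rw [if_neg h.ne]
      simp (disch := omega) only [toeplitzEntry_of_ge h₀, β, Nat.cast_sub, Nat.cast_add,
        Nat.cast_one]
      ring
    · rw [if_pos rfl]
      simp (disch := omega) only [toeplitzEntry_of_ge h₀, toeplitzEntry_of_le, α, β,
        Nat.cast_sub, Nat.cast_add, Nat.cast_one]
      ring
    · rw [if_neg h.ne']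
      simp (disch := omega) only [toeplitzEntry_of_le, α, Nat.cast_sub, Nat.cast_add,
        Nat.cast_one]
      ring

def arrowhead (c a b d : R) (n : ℕ) : Matrix (Fin n) (Fin n) R :=
  of fun i j => if (i : ℕ) = 0 then (if (j : ℕ) = 0 then c else b)
    else if (j : ℕ) = 0 then a else if (i : ℕ) = j then d else 0

theorem arrowhead_apply_eq_zero {c a b d : R} {n : ℕ} {i j : Fin n} (hi : (i : ℕ) ≠ 0)
    (hj : (j : ℕ) ≠ 0) (hij : (i : ℕ) ≠ j) : arrowhead c a b d n i j = 0 := by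
  simp [arrowhead, hi, hj, hij]

theorem det_arrowhead_submatrix_castSucc_succ (c a b d : R) (m : ℕ) :
    ((arrowhead c a b d (m + 2)).submatrix Fin.castSucc Fin.succ).det = (-1) ^ m * b * d ^ m := by
  have hcorner : arrowhead c a b d (m + 2) 0 (Fin.last m).succ = b := by simp [arrowhead]
  have hcol (i : Fin m) : arrowhead c a b d (m + 2) i.succ.castSucc (Fin.last m).succ = 0 :=
    arrowhead_apply_eq_zero (by simp) (by simp) (by simp [i.isLt.ne])
  have hdiag : ((arrowhead c a b d (m + 2)).submatrix Fin.castSucc Fin.succ).submatrix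
      Fin.succ Fin.castSucc = diagonal fun _ => d := by
    ext i j
    by_cases hij : i = j
    · simp [arrowhead, hij]
    · rw [diagonal_apply_ne _ hij, submatrix_apply, submatrix_apply]
      exact arrowhead_apply_eq_zero (by simp) (by simp) (by simpa [Fin.val_eq_val] using hij)
  rw [det_succ_column _ (Fin.last m), Fin.sum_univ_succ, Fin.succAbove_zero, Fin.succAbove_last,
    hdiag]
  simp only [submatrix_apply, Fin.castSucc_zero, hcorner, hcol, mul_zero, zero_mul,
    sum_const_zero, add_zero, det_diagonal, prod_const, card_univ, Fintype.card_fin,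
    Fin.val_zero, Fin.val_last, zero_add]

theorem det_arrowhead (c a b d : R) (m : ℕ) :
    (arrowhead c a b d (m + 2)).det = d ^ m * (c * d - (m + 1) * a * b) := by
  induction m with
  | zero =>
    rw [det_fin_two]
    simp [arrowhead, mul_comm]
  | succ m ih =>
    set A := arrowhead c a b d (m + 3)
    have hfirst : A (Fin.last _) 0 = a := by simp [A, arrowhead]
    have hlast : A (Fin.last _) (Fin.last _) = d := by simp [A, arrowhead]
    have hrow (j : Fin (m + 1)) : A (Fin.last _) j.castSucc.succ = 0 :=
      arrowhead_apply_eq_zero (by simp) (by simp) (by simp [j.isLt.ne'])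
    have hminor : A.submatrix Fin.castSucc Fin.castSucc = arrowhead c a b d (m + 2) := by
      ext i j
      simp [A, arrowhead]
    rw [det_succ_row A (Fin.last _), Fin.sum_univ_succ, Fin.sum_univ_castSucc, Fin.succ_last,
      Fin.succAbove_zero, Fin.succAbove_last, hfirst, hlast, hminor, ih,
      det_arrowhead_submatrix_castSucc_succ]
    simp only [hrow, mul_zero, zero_mul, sum_const_zero, zero_add, Fin.val_zero, Fin.val_last]
    have hodd : (-1 : R) ^ (m + 2 + 0) * (-1) ^ (m + 1) = -1 :=
      (pow_add _ _ _).symm.trans (Odd.neg_one_pow ⟨m + 1, by omega⟩)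
    have heven : (-1 : R) ^ (m + 2 + (m + 2)) = 1 := Even.neg_one_pow ⟨m + 2, rfl⟩
    rw [heven]
    push_cast
    linear_combination (a * b * d ^ (m + 1)) * hodd

theorem det_toeplitz_arith (a b c : R) (m : ℕ) :
    (toeplitz (fun k => (k : R) * a + c) (fun l => (l : R) * b + c) (m + 2)).det =
      (-(a + b)) ^ m * (c * -(a + b) - (m + 1) * a * b) := by
  have harrow : (of fun i j : Fin (m + 2) =>
      mixedDiff (toeplitzEntry (fun k => (k : R) * a + c) (fun l => (l : R) * b + c)) i j) =
        arrowhead c a b (-(a + b)) (m + 2) := by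
    ext i j
    exact mixedDiff_toeplitzEntry_arith a b c i j
  rw [toeplitz_eq_of, det_eq_det_mixedDiff, harrow, det_arrowhead]

/-- for `α_i = 2^{i-1}(i a + 2c)`, `β_j = 2^{j-1}(j b + 2c)`
(so that `α_0 = β_0 = c`), and `n ≥ 2`,
`det(P_{α,β}(n)) = (-1)^{n+1} (a+b)^{n-2} [c(a+b) + (n-1)ab]`. -/
theorem det_genPascal_two_pow_arith (a b c : ℂ) (n : ℕ) (hn : 2 ≤ n) :
    (genPascal (fun i => (2 : ℂ) ^ i * ((i : ℂ) * a + 2 * c) / 2)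
        (fun j => (2 : ℂ) ^ j * ((j : ℂ) * b + 2 * c) / 2) n).det =
      (-1 : ℂ) ^ (n + 1) * (a + b) ^ (n - 2) * (c * (a + b) + ((n : ℂ) - 1) * a * b) := by
  obtain ⟨m, rfl⟩ : ∃ m, n = m + 2 := ⟨n - 2, by omega⟩
  have hcheck (x : ℂ) :
      (fun i : ℕ => (2 : ℂ) ^ i * ((i : ℂ) * x + 2 * c) / 2) = checkSeq fun k => (k : ℂ) * x + c :=
    funext fun i => by rw [← two_mul_checkSeq_arith]; ring
  rw [hcheck a, hcheck b, det_genPascal_checkSeq (by simp), det_toeplitz_arith, Nat.add_sub_cancel,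
    neg_pow]
  push_cast
  ring
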